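/- arXiv:1407.3672 — 2 statements merged into one kernel-verified Lean document; each statement's English description precedes it below -/
import Mathlib

section
/- Let Ω_{u,v} = {(x,z) : x ∈ (−1,1), v(x) < z < u(x)} with u, v ∈ C¹, −1 ≤ v < u ≤ 0, and let φ ∈ W²₂(Ω_{u,v}) ∩ C(closure) satisfy ε²φ_xx + φ_zz = 0 in Ω_{u,v}, φ(±1, z) = 1+z, φ(x,u(x)) = 1, φ(x,v(x)) = 0. Suppose n ∈ 2ℕ is even and v(x) ≤ −xⁿ, u(x) ≥ xⁿ − 1 on (−1,1). Then xⁿ + z ≤ φ(x,z) ≤ 2 + z − xⁿ for all (x,z) in the closure of Ω_{u,v}. -/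
/-!
Both bounds compare `φ` with the barriers `S⁻ = xⁿ + z` and `S⁺ = 2 + z - xⁿ`. On `∂Ω` they
bracket `φ`: at `x = ±1` all three equal `1 + z` because `n` is even, and on the graphs of `v` and
`u` this is exactly `v ≤ -xⁿ`, `u ≥ xⁿ - 1` together with `-1 ≤ v`, `u ≤ 0`. Inside,
`Δ_ε S⁻ = ε² n (n-1) xⁿ⁻² ≥ 0 = Δ_ε φ ≥ -ε² n (n-1) xⁿ⁻² = Δ_ε S⁺`, so the weak maximum principle
propagates the boundary inequalities. That principle is proved classically: at an interior
minimum the second-derivative test in each coordinate direction makes `Δ_ε` nonnegative, which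
rules out strict supersolutions, and a supersolution `W` becomes strict after subtracting `δ x²`;
then `δ → 0`.
-/

open Set Filter Topology

theorem IsLocalMin.nonneg_of_hasDerivAt_of_hasDerivAt {f f' : ℝ → ℝ} {a c : ℝ}
    (hmin : IsLocalMin f a) (hf : ∀ᶠ t in 𝓝 a, HasDerivAt f (f' t) t)
    (hf' : HasDerivAt f' c a) : 0 ≤ c := by
  have hderiv : deriv f =ᶠ[𝓝 a] f' := hf.mono fun t ht => ht.deriv
  have hc : deriv (deriv f) a = c := hderiv.deriv_eq.trans hf'.deriv
  -- for `c < 0` the sufficient second-derivative test makes `a` a local maximum as well,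
  -- so `f` is locally constant and its second derivative at `a` vanishes
  by_contra! hneg
  have hmax : IsLocalMax f a :=
    isLocalMax_of_deriv_deriv_neg (hc ▸ hneg) hmin.deriv_eq_zero hf.self_of_nhds.continuousAt
  have hconst : f =ᶠ[𝓝 a] fun _ => f a :=
    (hmin.and hmax).mono fun t ht => le_antisymm ht.2 ht.1
  have : deriv (deriv f) a = 0 := by simpa using hconst.deriv.deriv_eq
  linarith

structure HasPureSecondPartials (W Wx Wz Wxx Wzz : ℝ × ℝ → ℝ) (Ω : Set (ℝ × ℝ)) : Prop where
  fst : ∀ p ∈ Ω, HasDerivAt (fun t => W (t, p.2)) (Wx p) p.1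
  fst_fst : ∀ p ∈ Ω, HasDerivAt (fun t => Wx (t, p.2)) (Wxx p) p.1
  snd : ∀ p ∈ Ω, HasDerivAt (fun t => W (p.1, t)) (Wz p) p.2
  snd_snd : ∀ p ∈ Ω, HasDerivAt (fun t => Wz (p.1, t)) (Wzz p) p.2

namespace HasPureSecondPartials

variable {W Wx Wz Wxx Wzz : ℝ × ℝ → ℝ} {Ω : Set (ℝ × ℝ)}

theorem sub {V Vx Vz Vxx Vzz : ℝ × ℝ → ℝ} (hW : HasPureSecondPartials W Wx Wz Wxx Wzz Ω)
    (hV : HasPureSecondPartials V Vx Vz Vxx Vzz Ω) :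
    HasPureSecondPartials (W - V) (Wx - Vx) (Wz - Vz) (Wxx - Vxx) (Wzz - Vzz) Ω where
  fst p hp := (hW.fst p hp).sub (hV.fst p hp)
  fst_fst p hp := (hW.fst_fst p hp).sub (hV.fst_fst p hp)
  snd p hp := (hW.snd p hp).sub (hV.snd p hp)
  snd_snd p hp := (hW.snd_snd p hp).sub (hV.snd_snd p hp)

theorem nonneg_of_isLocalMin (hW : HasPureSecondPartials W Wx Wz Wxx Wzz Ω) (hΩ : IsOpen Ω)
    {p : ℝ × ℝ} (hp : p ∈ Ω) (hmin : IsLocalMin W p) : 0 ≤ Wxx p ∧ 0 ≤ Wzz p := by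
  have hx : ContinuousAt (fun t : ℝ => (t, p.2)) p.1 := by fun_prop
  have hz : ContinuousAt (fun t : ℝ => (p.1, t)) p.2 := by fun_prop
  constructor
  · refine (hmin.comp_continuous hx).nonneg_of_hasDerivAt_of_hasDerivAt ?_ (hW.fst_fst p hp)
    filter_upwards [hx.eventually_mem (hΩ.mem_nhds hp)] with t ht using hW.fst _ ht
  · refine (hmin.comp_continuous hz).nonneg_of_hasDerivAt_of_hasDerivAt ?_ (hW.snd_snd p hp)
    filter_upwards [hz.eventually_mem (hΩ.mem_nhds hp)] with t ht using hW.snd _ ht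

end HasPureSecondPartials

theorem hasPureSecondPartials_mul_pow_add_mul_add (c b a : ℝ) (n : ℕ) (Ω : Set (ℝ × ℝ)) :
    HasPureSecondPartials (fun q => c * q.1 ^ n + b * q.2 + a) (fun q => c * n * q.1 ^ (n - 1))
      (fun _ => b) (fun q => c * (n * (n - 1) : ℕ) * q.1 ^ (n - 2)) (fun _ => 0) Ω where
  fst p _ := by
    simpa [mul_assoc] using (((hasDerivAt_pow n p.1).const_mul c).add_const (b * p.2 + a))
  fst_fst p _ := by
    refine ((hasDerivAt_pow (n - 1) p.1).const_mul (c * n)).congr_deriv ?_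
    rw [Nat.sub_sub, Nat.cast_mul]
    ring
  snd p _ := by
    simpa using (((hasDerivAt_id p.2).const_mul b).const_add (c * p.1 ^ n)).add_const a
  snd_snd _ _ := hasDerivAt_const _ _

section MinimumPrinciple

variable {Ω : Set (ℝ × ℝ)} {a b : ℝ}

theorem exists_mem_frontier_le_of_strict_supersolution {V Vx Vz Vxx Vzz : ℝ × ℝ → ℝ}
    (hΩ : IsOpen Ω) (hbdd : Bornology.IsBounded Ω) (ha : 0 ≤ a) (hb : 0 ≤ b)
    (hV : HasPureSecondPartials V Vx Vz Vxx Vzz Ω) (hc : ContinuousOn V (closure Ω))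
    (hstrict : ∀ p ∈ Ω, a * Vxx p + b * Vzz p < 0) {p : ℝ × ℝ} (hp : p ∈ closure Ω) :
    ∃ q ∈ frontier Ω, V q ≤ V p := by
  obtain ⟨q, hq, hmin⟩ := hbdd.isCompact_closure.exists_isMinOn ⟨p, hp⟩ hc
  refine ⟨q, hΩ.frontier_eq ▸ ⟨hq, fun hqΩ => ?_⟩, hmin hp⟩
  obtain ⟨hxx, hzz⟩ := hV.nonneg_of_isLocalMin hΩ hqΩ
    (hmin.isLocalMin (mem_of_superset (hΩ.mem_nhds hqΩ) subset_closure))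
  linarith [hstrict q hqΩ, mul_nonneg ha hxx, mul_nonneg hb hzz]

theorem nonneg_of_supersolution_of_nonneg_on_frontier {W Wx Wz Wxx Wzz : ℝ × ℝ → ℝ}
    (hΩ : IsOpen Ω) (hbdd : Bornology.IsBounded Ω) (ha : 0 < a) (hb : 0 ≤ b)
    (hW : HasPureSecondPartials W Wx Wz Wxx Wzz Ω) (hc : ContinuousOn W (closure Ω))
    (hsuper : ∀ p ∈ Ω, a * Wxx p + b * Wzz p ≤ 0) (hfr : ∀ p ∈ frontier Ω, 0 ≤ W p) :
    ∀ p ∈ closure Ω, 0 ≤ W p := by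
  intro p hp
  obtain ⟨R, hR⟩ := hbdd.isCompact_closure.bddAbove_image
    (continuous_fst.pow 2).continuousOn (f := fun q : ℝ × ℝ => q.1 ^ 2)
  -- `W - δ x²` is a strict supersolution, so it attains its minimum on the frontier
  have hperturbed : ∀ δ > 0, -(δ * R) ≤ W p := by
    intro δ hδ
    have hstrict : ∀ q ∈ Ω, a * (Wxx q - δ * 2) + b * Wzz q < 0 := fun q hq => by
      nlinarith [hsuper q hq]
    obtain ⟨q, hq, hle⟩ := exists_mem_frontier_le_of_strict_supersolution hΩ hbdd ha.le hb
      (hW.sub (hasPureSecondPartials_mul_pow_add_mul_add δ 0 0 2 Ω))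
      (hc.sub (by fun_prop)) (by simpa using hstrict) hp
    have hqR := hR ⟨q, frontier_subset_closure hq, rfl⟩
    simp only [Pi.sub_apply] at hle
    nlinarith [hfr q hq, sq_nonneg p.1]
  refine le_of_tendsto (f := fun δ : ℝ => -(δ * R)) (x := 𝓝[>] 0) ?_
    (eventually_nhdsWithin_of_forall hperturbed)
  exact tendsto_nhdsWithin_of_tendsto_nhds (Continuous.tendsto' (by fun_prop) 0 0 (by simp))

theorem le_of_le_on_frontier {S Sx Sz Sxx Szz T Tx Tz Txx Tzz : ℝ × ℝ → ℝ}
    (hΩ : IsOpen Ω) (hbdd : Bornology.IsBounded Ω) (ha : 0 < a) (hb : 0 ≤ b)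
    (hS : HasPureSecondPartials S Sx Sz Sxx Szz Ω) (hT : HasPureSecondPartials T Tx Tz Txx Tzz Ω)
    (hSc : ContinuousOn S (closure Ω)) (hTc : ContinuousOn T (closure Ω))
    (hST : ∀ p ∈ Ω, a * Txx p + b * Tzz p ≤ a * Sxx p + b * Szz p)
    (hfr : ∀ p ∈ frontier Ω, S p ≤ T p) : ∀ p ∈ closure Ω, S p ≤ T p := fun p hp =>
  sub_nonneg.1 <| nonneg_of_supersolution_of_nonneg_on_frontier hΩ hbdd ha hb (hT.sub hS)
    (hTc.sub hSc) (fun q hq => by simp only [Pi.sub_apply]; linarith [hST q hq])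
    (fun q hq => sub_nonneg.2 (hfr q hq)) p hp

end MinimumPrinciple

section RegionBetween

variable {α : Type*} [TopologicalSpace α] {f g : α → ℝ} {s : Set α}

theorem continuousOn_graph_margins (hf : ContinuousOn f s) (hg : ContinuousOn g s) :
    ContinuousOn (fun p : α × ℝ => (p.2 - f p.1, g p.1 - p.2)) (s ×ˢ univ) :=
  (continuous_snd.continuousOn.sub (hf.comp continuous_fst.continuousOn fun _ hp => hp.1)).prodMk
    ((hg.comp continuous_fst.continuousOn fun _ hp => hp.1).sub continuous_snd.continuousOn)

theorem isOpen_regionBetween (hs : IsOpen s) (hf : ContinuousOn f s) (hg : ContinuousOn g s) :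
    IsOpen (regionBetween f g s) := by
  convert (continuousOn_graph_margins hf hg).isOpen_inter_preimage (hs.prod isOpen_univ)
    ((isOpen_Ioi (a := 0)).prod (isOpen_Ioi (a := 0))) using 1
  ext p
  simp [regionBetween, sub_pos]

theorem closure_regionBetween_subset {t : Set α} (ht : IsClosed t) (hst : s ⊆ t)
    (hf : ContinuousOn f t) (hg : ContinuousOn g t) :
    closure (regionBetween f g s) ⊆ {p | p.1 ∈ t ∧ p.2 ∈ Icc (f p.1) (g p.1)} := by
  refine closure_minimal (fun p hp => ⟨hst hp.1, hp.2.1.le, hp.2.2.le⟩) ?_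
  convert (continuousOn_graph_margins hf hg).preimage_isClosed_of_isClosed
    (ht.prod isClosed_univ) ((isClosed_Ici (a := 0)).prod (isClosed_Ici (a := 0))) using 1
  ext p
  simp [sub_nonneg]

end RegionBetween

theorem isBounded_regionBetween {α : Type*} [Bornology α] {f g : α → ℝ} {s : Set α} {m M : ℝ}
    (hs : Bornology.IsBounded s) (hf : ∀ x ∈ s, m ≤ f x) (hg : ∀ x ∈ s, g x ≤ M) :
    Bornology.IsBounded (regionBetween f g s) :=
  (hs.prod (Metric.isBounded_Icc m M)).subset fun _ hp =>
    ⟨hp.1, (hf _ hp.1).trans hp.2.1.le, hp.2.2.le.trans (hg _ hp.1)⟩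

theorem mem_frontier_regionBetween_Ioo {f g : ℝ → ℝ} {a b : ℝ} (hf : ContinuousOn f (Icc a b))
    (hg : ContinuousOn g (Icc a b)) {p : ℝ × ℝ} (hp : p ∈ frontier (regionBetween f g (Ioo a b))) :
    ((p.1 = a ∨ p.1 = b) ∧ p.2 ∈ Icc (f p.1) (g p.1)) ∨
      (p.1 ∈ Ioo a b ∧ (p.2 = f p.1 ∨ p.2 = g p.1)) := by
  rw [(isOpen_regionBetween isOpen_Ioo (hf.mono Ioo_subset_Icc_self)
    (hg.mono Ioo_subset_Icc_self)).frontier_eq] at hp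
  obtain ⟨hx, hz⟩ := closure_regionBetween_subset isClosed_Icc Ioo_subset_Icc_self hf hg hp.1
  by_cases hx' : p.1 ∈ Ioo a b
  · refine Or.inr ⟨hx', ?_⟩
    by_contra! hne
    exact hp.2 ⟨hx', lt_of_le_of_ne hz.1 hne.1.symm, lt_of_le_of_ne hz.2 hne.2⟩
  · refine Or.inl ⟨?_, hz⟩
    rcases hx.1.eq_or_lt with h | h
    · exact Or.inl h.symm
    · exact Or.inr (hx.2.eq_or_lt.resolve_right fun h' => hx' ⟨h, h'⟩)

theorem barrier_bounds_on_frontier {u v : ℝ → ℝ} {φ : ℝ × ℝ → ℝ} {n : ℕ} (hn : Even n)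
    (hu : ContinuousOn u (Icc (-1) 1)) (hv : ContinuousOn v (Icc (-1) 1))
    (huv : ∀ x ∈ Icc (-1 : ℝ) 1, -1 ≤ v x ∧ u x ≤ 0)
    (hbd1 : ∀ z ∈ Icc (v 1) (u 1), φ (1, z) = 1 + z)
    (hbd2 : ∀ z ∈ Icc (v (-1)) (u (-1)), φ (-1, z) = 1 + z)
    (hbd3 : ∀ x ∈ Icc (-1 : ℝ) 1, φ (x, u x) = 1) (hbd4 : ∀ x ∈ Icc (-1 : ℝ) 1, φ (x, v x) = 0)
    (hvn : ∀ x ∈ Ioo (-1 : ℝ) 1, v x ≤ -x ^ n) (hun : ∀ x ∈ Ioo (-1 : ℝ) 1, x ^ n - 1 ≤ u x) :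
    ∀ p ∈ frontier (regionBetween v u (Ioo (-1) 1)),
      p.1 ^ n + p.2 ≤ φ p ∧ φ p ≤ 2 + p.2 - p.1 ^ n := by
  have hIoo : Ioo (-1 : ℝ) 1 ⊆ Icc (-1) 1 := Ioo_subset_Icc_self
  have hpow_le : ∀ x ∈ Icc (-1 : ℝ) 1, x ^ n ≤ 1 := fun x hx =>
    hn.pow_abs x ▸ pow_le_one₀ (abs_nonneg x) (abs_le.2 hx)
  rintro ⟨x, z⟩ hp
  have hcases := mem_frontier_regionBetween_Ioo hv hu hp
  dsimp only at hcases
  rcases hcases with ⟨rfl | rfl, hz⟩ | ⟨hx, rfl | rfl⟩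
  · simp only [hbd2 z hz, hn.neg_one_pow]
    constructor <;> linarith
  · simp only [hbd1 z hz, one_pow]
    constructor <;> linarith
  · simp only [hbd4 x (hIoo hx)]
    constructor <;> linarith [hvn x hx, hpow_le x (hIoo hx), huv x (hIoo hx)]
  · simp only [hbd3 x (hIoo hx)]
    constructor <;> linarith [hun x hx, hpow_le x (hIoo hx), huv x (hIoo hx)]

/-- Barrier bounds for the electrostatic potential via the weak maximum
principle: `xⁿ + z ≤ φ(x,z) ≤ 2 + z - xⁿ` on the closure of `Ω_{u,v}`. -/
theorem potential_barrier_bounds (u v : ℝ → ℝ) (φ φx φz φxx φzz : ℝ × ℝ → ℝ)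
    (ε : ℝ) (hε : 0 < ε) (n : ℕ) (hn : Even n)
    (Ω : Set (ℝ × ℝ))
    (hΩ : Ω = {p : ℝ × ℝ | p.1 ∈ Set.Ioo (-1:ℝ) 1 ∧ p.2 ∈ Set.Ioo (v p.1) (u p.1)})
    (hu : ContinuousOn u (Set.Icc (-1) 1)) (hv : ContinuousOn v (Set.Icc (-1) 1))
    (huv : ∀ x ∈ Set.Icc (-1:ℝ) 1, -1 ≤ v x ∧ v x < u x ∧ u x ≤ 0)
    (hφc : ContinuousOn φ (closure Ω))
    (hφx : ∀ p ∈ Ω, HasDerivAt (fun t => φ (t, p.2)) (φx p) p.1)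
    (hφxx : ∀ p ∈ Ω, HasDerivAt (fun t => φx (t, p.2)) (φxx p) p.1)
    (hφz : ∀ p ∈ Ω, HasDerivAt (fun t => φ (p.1, t)) (φz p) p.2)
    (hφzz : ∀ p ∈ Ω, HasDerivAt (fun t => φz (p.1, t)) (φzz p) p.2)
    (hharm : ∀ p ∈ Ω, ε^2 * φxx p + φzz p = 0)
    (hbd1 : ∀ z ∈ Set.Icc (v 1) (u 1), φ (1, z) = 1 + z)
    (hbd2 : ∀ z ∈ Set.Icc (v (-1)) (u (-1)), φ (-1, z) = 1 + z)
    (hbd3 : ∀ x ∈ Set.Icc (-1:ℝ) 1, φ (x, u x) = 1)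
    (hbd4 : ∀ x ∈ Set.Icc (-1:ℝ) 1, φ (x, v x) = 0)
    (hvn : ∀ x ∈ Set.Ioo (-1:ℝ) 1, v x ≤ -x^n)
    (hun : ∀ x ∈ Set.Ioo (-1:ℝ) 1, x^n - 1 ≤ u x) :
    ∀ p ∈ closure Ω, p.1^n + p.2 ≤ φ p ∧ φ p ≤ 2 + p.2 - p.1^n := by
  replace hΩ : Ω = regionBetween v u (Ioo (-1) 1) := hΩ
  subst hΩ
  have hIoo : Ioo (-1 : ℝ) 1 ⊆ Icc (-1) 1 := Ioo_subset_Icc_self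
  have hopen := isOpen_regionBetween isOpen_Ioo (hv.mono hIoo) (hu.mono hIoo)
  have hbdd := isBounded_regionBetween (Metric.isBounded_Ioo (-1 : ℝ) 1)
    (fun x hx => (huv x (hIoo hx)).1) (fun x hx => (huv x (hIoo hx)).2.2)
  have hφ : HasPureSecondPartials φ φx φz φxx φzz _ := ⟨hφx, hφxx, hφz, hφzz⟩
  have hfrontier := barrier_bounds_on_frontier hn hu hv
    (fun x hx => ⟨(huv x hx).1, (huv x hx).2.2⟩) hbd1 hbd2 hbd3 hbd4 hvn hun
  have hconvex : ∀ x : ℝ, 0 ≤ ε ^ 2 * (((n * (n - 1) : ℕ) : ℝ) * x ^ (n - 2)) := fun x =>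
    mul_nonneg (sq_nonneg ε) (mul_nonneg (Nat.cast_nonneg _) ((hn.tsub even_two).pow_nonneg x))
  have hlower := le_of_le_on_frontier hopen hbdd (pow_pos hε 2) zero_le_one
    (hasPureSecondPartials_mul_pow_add_mul_add 1 1 0 n _) hφ (by fun_prop) hφc
    (fun p hp => by linarith [hharm p hp, hconvex p.1])
    (fun p hp => by linarith [(hfrontier p hp).1])
  have hupper := le_of_le_on_frontier hopen hbdd (pow_pos hε 2) zero_le_one
    hφ (hasPureSecondPartials_mul_pow_add_mul_add (-1) 1 2 n _) hφc (by fun_prop)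
    (fun p hp => by linarith [hharm p hp, hconvex p.1])
    (fun p hp => by linarith [(hfrontier p hp).2])
  exact fun p hp => ⟨by linarith [hlower p hp], by linarith [hupper p hp]⟩
end

section
/- If v ∈ C¹([−1,1]) with v ≤ c < 0 and ‖v'‖_∞ ≤ c₀, then there exists an even n ∈ ℕ such that v(x) ≤ −xⁿ for all x ∈ [−1,1]. -/
/-!
Choose `n` even with `n * (-c) ≥ c₀`. Where `|x|ⁿ ≤ -c` the bound `v ≤ c` suffices.
Where `|x|ⁿ > -c`, also `|x|ⁿ⁻¹ > -c`, so
`1 - |x|ⁿ = (1 - |x|) ∑_{i<n} |x|ⁱ ≥ n |x|ⁿ⁻¹ (1 - |x|)` is at least `c₀ (1 - |x|)`, while the gradient bound and `v (±1) = -1` give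
`v x ≤ -1 + c₀ (1 - |x|)`.
-/

open Set Finset

section PowerBounds

variable {R : Type*} [CommRing R] [LinearOrder R] [IsStrictOrderedRing R] {t : R}

theorem natCast_mul_pow_pred_mul_one_sub_le (ht₀ : 0 ≤ t) (ht₁ : t ≤ 1) (n : ℕ) :
    n * t ^ (n - 1) * (1 - t) ≤ 1 - t ^ n := by
  rw [← geom_sum_mul_of_le_one ht₁]
  gcongr
  simpa using card_nsmul_le_sum (range n) (t ^ ·) (t ^ (n - 1)) fun i hi =>
      pow_le_pow_of_le_one ht₀ ht₁ (by grind)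

theorem mul_one_sub_le_one_sub_pow {ε C : R} {n : ℕ} (ht₀ : 0 ≤ t) (ht₁ : t ≤ 1)
    (hε : ε ≤ t ^ n) (hC : C ≤ n * ε) : C * (1 - t) ≤ 1 - t ^ n :=
  calc C * (1 - t) ≤ n * ε * (1 - t) := by gcongr
    _ ≤ n * t ^ (n - 1) * (1 - t) := by
        gcongr
        exact hε.trans (pow_le_pow_of_le_one ht₀ ht₁ (n.sub_le 1))
    _ ≤ 1 - t ^ n := natCast_mul_pow_pred_mul_one_sub_le ht₀ ht₁ n

end PowerBounds

theorem le_add_mul_one_sub_abs_of_abs_deriv_le {v v' : ℝ → ℝ} {a C : ℝ}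
    (hv : ∀ x ∈ Icc (-1 : ℝ) 1, HasDerivAt v (v' x) x)
    (hv' : ∀ x ∈ Icc (-1 : ℝ) 1, |v' x| ≤ C) (hm : v (-1) = a) (hp : v 1 = a)
    {x : ℝ} (hx : x ∈ Icc (-1 : ℝ) 1) : v x ≤ a + C * (1 - |x|) := by
  have lip : ∀ y ∈ Icc (-1 : ℝ) 1, |v x - v y| ≤ C * |x - y| := fun y hy =>
    (convex_Icc (-1 : ℝ) 1).norm_image_sub_le_of_norm_hasDerivWithin_le
      (fun z hz => (hv z hz).hasDerivWithinAt) hv' hy hx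
  obtain ⟨hx₁, hx₂⟩ := hx
  rcases le_or_gt 0 x with h | h
  · have := lip 1 (by norm_num)
    rw [hp, abs_of_nonneg h, abs_of_nonpos (by linarith : x - 1 ≤ 0)] at *
    linarith [le_abs_self (v x - a)]
  · have := lip (-1) (by norm_num)
    rw [hm, abs_of_neg h, abs_of_nonneg (by linarith : 0 ≤ x - -1)] at *
    linarith [le_abs_self (v x - a)]

theorem exists_even_power_barrier_general (v v' : ℝ → ℝ) (c c₀ : ℝ)
    (hc : c < 0)
    (hv : ∀ x ∈ Set.Icc (-1:ℝ) 1, HasDerivAt v (v' x) x)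
    (hv' : ∀ x ∈ Set.Icc (-1:ℝ) 1, |v' x| ≤ c₀)
    (hvc : ∀ x ∈ Set.Icc (-1:ℝ) 1, v x ≤ c)
    (hbd : v (-1) = -1 ∧ v 1 = -1) :
    ∃ n : ℕ, Even n ∧ ∀ x ∈ Set.Icc (-1:ℝ) 1, v x ≤ -x^n := by
  obtain ⟨m, hm⟩ := exists_nat_ge (c₀ / -c)
  have hn : c₀ ≤ (2 * m : ℕ) * -c := by
    rw [div_le_iff₀ (by linarith)] at hm
    push_cast
    nlinarith
  refine ⟨2 * m, even_two_mul m, fun x hx => ?_⟩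
  rw [← (even_two_mul m).pow_abs]
  by_cases hsmall : |x| ^ (2 * m) ≤ -c
  · linarith [hvc x hx]
  · have hx' := abs_le.mpr hx
    have := mul_one_sub_le_one_sub_pow (abs_nonneg x) hx' (not_le.mp hsmall).le hn
    linarith [le_add_mul_one_sub_abs_of_abs_deriv_le hv hv' hbd.1 hbd.2 hx]

/-- If `v ≤ c < 0` on `[-1,1]` with a uniform gradient bound, then `v` lies
below `-xⁿ` for some even `n`. -/
theorem exists_even_power_barrier (v v' : ℝ → ℝ) (c c₀ : ℝ)
    (hc : c < 0) (hc₀ : 0 < c₀)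
    (hv : ∀ x ∈ Set.Icc (-1:ℝ) 1, HasDerivAt v (v' x) x)
    (hv' : ∀ x ∈ Set.Icc (-1:ℝ) 1, |v' x| ≤ c₀)
    (hvc : ∀ x ∈ Set.Icc (-1:ℝ) 1, v x ≤ c)
    (hbd : v (-1) = -1 ∧ v 1 = -1) :
    ∃ n : ℕ, Even n ∧ ∀ x ∈ Set.Icc (-1:ℝ) 1, v x ≤ -x^n :=
  exists_even_power_barrier_general v v' c c₀ hc hv hv' hvc hbd
end
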